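/- The Hankel determinant of the q-exponential polynomials φ_n(x) = sum_{k=0}^n S[n,k]·x^k satisfies det(φ_{i+j}(x))_{i,j=0}^{n-1} = x^{C(n,2)} · q^{C(n,3)} · product_{j=0}^{n-1} [j]!. -/
import Mathlib


open Finset Matrix

/-- The q-integer `[n] = 1 + q + ... + q^(n-1)`. -/
def qint {R : Type*} [CommRing R] (q : R) (n : ℕ) : R := ∑ i ∈ Finset.range n, q ^ i

/-- The q-factorial `[n]! = [1][2]⋯[n]`. -/
def qfact {R : Type*} [CommRing R] (q : R) (n : ℕ) : R := ∏ i ∈ Finset.range n, qint q (i + 1)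

/-- The Gaussian binomial coefficient, via the q-Pascal recurrence. -/
def qbinom {R : Type*} [CommRing R] (q : R) : ℕ → ℕ → R
  | 0, 0 => 1
  | 0, _ + 1 => 0
  | _ + 1, 0 => 1
  | n + 1, k + 1 => qbinom q n k + q ^ (k + 1) * qbinom q n (k + 1)

/-- The q-Stirling numbers of the second kind:
`S[n,k] = S[n-1,k-1] + [k]·S[n-1,k]`, `S[0,k] = δ_{k0}`, `S[n,0] = δ_{n0}`. -/
def qStirling2 {R : Type*} [CommRing R] (q : R) : ℕ → ℕ → R
  | 0, 0 => 1
  | 0, _ + 1 => 0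
  | _ + 1, 0 => 0
  | n + 1, k + 1 => qStirling2 q n k + qint q (k + 1) * qStirling2 q n (k + 1)

/-- The q-Pochhammer symbol `(a;q)_m = ∏_{j<m} (1 - q^j a)`. -/
def qpoch {R : Type*} [CommRing R] (q a : R) (m : ℕ) : R := ∏ j ∈ Finset.range m, (1 - q ^ j * a)

section HankelAux

variable {R : Type*} [CommRing R] (q x : R)

lemma qint_zero : qint q 0 = 0 := by simp [qint]

lemma qint_one : qint q 1 = 1 := by simp [qint]

lemma qint_succ (n : ℕ) : qint q (n + 1) = q * qint q n + 1 := geom_sum_succ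

lemma qbinom_zero_right (n : ℕ) : qbinom q n 0 = 1 := by cases n <;> rfl

lemma qbinom_eq_zero : ∀ {n k : ℕ}, n < k → qbinom q n k = 0
  | 0, _ + 1, _ => rfl
  | n + 1, k + 1, h => by
      show qbinom q n k + q ^ (k + 1) * qbinom q n (k + 1) = 0
      rw [qbinom_eq_zero (by omega), qbinom_eq_zero (by omega)]
      ring

lemma qbinom_diag : ∀ n : ℕ, qbinom q n n = 1
  | 0 => rfl
  | n + 1 => by
      show qbinom q n n + q ^ (n + 1) * qbinom q n (n + 1) = 1
      rw [qbinom_diag n, qbinom_eq_zero q (Nat.lt_succ_self n)]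
      ring

lemma qbinom_one_right : ∀ n : ℕ, qbinom q n 1 = qint q n
  | 0 => by simp [qbinom, qint]
  | n + 1 => by
      show qbinom q n 0 + q ^ 1 * qbinom q n 1 = qint q (n + 1)
      rw [qbinom_zero_right, qbinom_one_right n, qint_succ]
      ring

lemma qStirling2_eq_zero : ∀ {n k : ℕ}, n < k → qStirling2 q n k = 0
  | 0, _ + 1, _ => rfl
  | n + 1, k + 1, h => by
      show qStirling2 q n k + qint q (k + 1) * qStirling2 q n (k + 1) = 0
      rw [qStirling2_eq_zero (by omega), qStirling2_eq_zero (by omega)]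
      ring

lemma qStirling2_diag : ∀ n : ℕ, qStirling2 q n n = 1
  | 0 => rfl
  | n + 1 => by
      show qStirling2 q n n + qint q (n + 1) * qStirling2 q n (n + 1) = 1
      rw [qStirling2_diag n, qStirling2_eq_zero q (Nat.lt_succ_self n)]
      ring

/-- Key q-binomial identity: `[m]·C(m,k) = [k]·C(m,k) + q^k·[k+1]·C(m,k+1)`. -/
lemma qkey : ∀ m k : ℕ, qint q m * qbinom q m k
    = qint q k * qbinom q m k + q ^ k * qint q (k + 1) * qbinom q m (k + 1)
  | 0, 0 => by simp [qbinom, qint]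
  | 0, k + 1 => by
      rw [qbinom_eq_zero q (show 0 < k + 1 by omega),
        qbinom_eq_zero q (show 0 < k + 2 by omega)]
      ring
  | m + 1, 0 => by
      rw [qbinom_zero_right, qint_zero, qint_one, qbinom_one_right]
      ring
  | m + 1, k + 1 => by
      have h1 := qkey m k
      have h2 := qkey m (k + 1)
      have e1 : qbinom q (m + 1) (k + 1)
          = qbinom q m k + q ^ (k + 1) * qbinom q m (k + 1) := rfl
      have e2 : qbinom q (m + 1) (k + 2)
          = qbinom q m (k + 1) + q ^ (k + 2) * qbinom q m (k + 2) := rfl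
      rw [e1, e2, qint_succ q m, qint_succ q (k + 1)] at *
      rw [qint_succ q k] at *
      linear_combination q * h1 + q ^ (k + 2) * h2

end HankelAux

section HankelL

variable {R : Type*} [CommRing R] (q x : R)

/-- `bAux m k = C_q(m,k) x^(m-k)`. -/
def bAux (m k : ℕ) : R := qbinom q m k * x ^ (m - k)

/-- The lower-triangular connection matrix. -/
def Lmat (i k : ℕ) : R := ∑ m ∈ Finset.range (i + 1), qStirling2 q i m * bAux q x m k

/-- The diagonal entries `x^k q^(C(k,2)) [k]!`. -/
def Ediag (k : ℕ) : R := x ^ k * (q ^ (k.choose 2) * qfact q k)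

lemma bAux_eq_zero {m k : ℕ} (h : m < k) : bAux q x m k = 0 := by
  rw [bAux, qbinom_eq_zero q h, zero_mul]

lemma bid0 (m : ℕ) :
    bAux q x (m + 1) 0 + qint q m * bAux q x m 0
      = x * bAux q x m 0 + x * bAux q x m 1 := by
  cases m with
  | zero => simp [bAux, qbinom, qint]
  | succ m =>
      simp only [bAux, qbinom_zero_right, qbinom_one_right, Nat.sub_zero,
        Nat.succ_sub_one, one_mul]
      ring

lemma bidS (m k : ℕ) :
    bAux q x (m + 1) (k + 1) + qint q m * bAux q x m (k + 1)
      = bAux q x m k + (qint q (k + 1) + x * q ^ (k + 1)) * bAux q x m (k + 1)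
        + x * q ^ (k + 1) * qint q (k + 2) * bAux q x m (k + 2) := by
  rcases lt_trichotomy m k with h | rfl | h
  · rw [bAux_eq_zero q x (show m + 1 < k + 1 by omega),
      bAux_eq_zero q x (show m < k + 1 by omega),
      bAux_eq_zero q x h, bAux_eq_zero q x (show m < k + 2 by omega)]
    ring
  · rw [bAux_eq_zero q x (show m < m + 1 by omega),
      bAux_eq_zero q x (show m < m + 2 by omega)]
    simp only [bAux, qbinom_diag, Nat.sub_self, pow_zero, mul_one]
    ring
  · rcases Nat.lt_or_ge m (k + 2) with h2 | h2
    · have hm : m = k + 1 := by omega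
      subst hm
      rw [bAux_eq_zero q x (show k + 1 < k + 2 by omega)]
      have e1 : bAux q x (k + 2) (k + 1)
          = (qbinom q (k + 1) k + q ^ (k + 1) * qbinom q (k + 1) (k + 1))
              * x ^ (k + 2 - (k + 1)) := rfl
      rw [e1, show k + 2 - (k + 1) = 1 from by omega]
      simp only [bAux, qbinom_diag, Nat.sub_self, pow_zero, mul_one,
        show k + 1 - k = 1 from by omega]
      ring
    · obtain ⟨e, rfl⟩ : ∃ e, m = k + 2 + e := ⟨m - (k + 2), by omega⟩
      have key := qkey q (k + 2 + e) (k + 1)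
      have pas : qbinom q (k + 2 + e + 1) (k + 1)
          = qbinom q (k + 2 + e) k + q ^ (k + 1) * qbinom q (k + 2 + e) (k + 1) := rfl
      simp only [bAux, pas,
        show k + 2 + e + 1 - (k + 1) = e + 2 from by omega,
        show k + 2 + e - (k + 1) = e + 1 from by omega,
        show k + 2 + e - k = e + 2 from by omega,
        show k + 2 + e - (k + 2) = e from by omega]
      linear_combination x ^ (e + 1) * key

lemma stirling_shift (i : ℕ) (c : ℕ → R) :
    ∑ m ∈ Finset.range (i + 2), qStirling2 q (i + 1) m * c m
      = ∑ m ∈ Finset.range (i + 1), qStirling2 q i m * (c (m + 1) + qint q m * c m) := by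
  rw [Finset.sum_range_succ']
  have h0 : qStirling2 q (i + 1) 0 = (0 : R) := rfl
  rw [h0, zero_mul, add_zero]
  have hrec : ∀ m : ℕ, qStirling2 q (i + 1) (m + 1)
      = qStirling2 q i m + qint q (m + 1) * qStirling2 q i (m + 1) := fun m => rfl
  simp only [hrec, add_mul, mul_add, Finset.sum_add_distrib]
  congr 1
  have f0 : qint q 0 * qStirling2 q i 0 * c 0 = 0 := by rw [qint_zero]; ring
  have ftop : qint q (i + 1) * qStirling2 q i (i + 1) * c (i + 1) = 0 := by
    rw [qStirling2_eq_zero q (Nat.lt_succ_self i)]; ring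
  calc ∑ m ∈ Finset.range (i + 1), qint q (m + 1) * qStirling2 q i (m + 1) * c (m + 1)
      = (∑ m ∈ Finset.range (i + 1),
          qint q (m + 1) * qStirling2 q i (m + 1) * c (m + 1))
          + qint q 0 * qStirling2 q i 0 * c 0 := by rw [f0, add_zero]
    _ = ∑ m ∈ Finset.range (i + 2), qint q m * qStirling2 q i m * c m :=
        (Finset.sum_range_succ' (fun m => qint q m * qStirling2 q i m * c m) (i + 1)).symm
    _ = (∑ m ∈ Finset.range (i + 1), qint q m * qStirling2 q i m * c m)
          + qint q (i + 1) * qStirling2 q i (i + 1) * c (i + 1) :=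
        Finset.sum_range_succ (fun m => qint q m * qStirling2 q i m * c m) (i + 1)
    _ = ∑ m ∈ Finset.range (i + 1), qint q m * qStirling2 q i m * c m := by
        rw [ftop, add_zero]
    _ = ∑ m ∈ Finset.range (i + 1), qStirling2 q i m * (qint q m * c m) :=
        Finset.sum_congr rfl fun m _ => by ring

lemma Lmat_succ_zero (i : ℕ) :
    Lmat q x (i + 1) 0 = x * Lmat q x i 0 + x * Lmat q x i 1 := by
  unfold Lmat
  rw [show i + 1 + 1 = i + 2 from rfl, stirling_shift]
  rw [Finset.mul_sum, Finset.mul_sum, ← Finset.sum_add_distrib]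
  refine Finset.sum_congr rfl fun m _ => ?_
  have h := bid0 q x m
  linear_combination qStirling2 q i m * h

lemma Lmat_succ_succ (i k : ℕ) :
    Lmat q x (i + 1) (k + 1)
      = Lmat q x i k + (qint q (k + 1) + x * q ^ (k + 1)) * Lmat q x i (k + 1)
        + x * q ^ (k + 1) * qint q (k + 2) * Lmat q x i (k + 2) := by
  unfold Lmat
  rw [show i + 1 + 1 = i + 2 from rfl, stirling_shift]
  rw [Finset.mul_sum, Finset.mul_sum, ← Finset.sum_add_distrib, ← Finset.sum_add_distrib]
  refine Finset.sum_congr rfl fun m _ => ?_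
  have h := bidS q x m k
  linear_combination qStirling2 q i m * h

lemma Lmat_eq_zero {i k : ℕ} (h : i < k) : Lmat q x i k = 0 := by
  refine Finset.sum_eq_zero fun m hm => ?_
  rw [bAux_eq_zero q x (show m < k by
    have := Finset.mem_range.mp hm; omega)]
  ring

lemma Lmat_diag (i : ℕ) : Lmat q x i i = 1 := by
  unfold Lmat
  rw [Finset.sum_range_succ, Finset.sum_eq_zero fun m hm => by
    rw [bAux_eq_zero q x (Finset.mem_range.mp hm)]; ring]
  rw [qStirling2_diag]
  show 0 + 1 * (qbinom q i i * x ^ (i - i)) = 1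
  rw [qbinom_diag, Nat.sub_self, pow_zero]
  ring

lemma Lmat_zero_right (i : ℕ) :
    Lmat q x i 0 = ∑ m ∈ Finset.range (i + 1), qStirling2 q i m * x ^ m := by
  unfold Lmat
  refine Finset.sum_congr rfl fun m _ => ?_
  rw [bAux, qbinom_zero_right, Nat.sub_zero, one_mul]

lemma Ediag_zero : Ediag q x 0 = 1 := by simp [Ediag, qfact]

lemma Ediag_succ (k : ℕ) :
    Ediag q x (k + 1) = x * q ^ k * qint q (k + 1) * Ediag q x k := by
  unfold Ediag qfact
  rw [Finset.prod_range_succ, Nat.choose_succ_succ k 1, Nat.choose_one_right, pow_add, pow_add]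
  ring

/-- The truncated bilinear form. -/
def Tb (i j N : ℕ) : R := ∑ k ∈ Finset.range N, Lmat q x i k * Ediag q x k * Lmat q x j k

lemma Tb_comm (i j N : ℕ) : Tb q x i j N = Tb q x j i N :=
  Finset.sum_congr rfl fun k _ => by ring

lemma Tb_expand {i : ℕ} (j : ℕ) {N : ℕ} (h : i + 2 ≤ N) :
    Tb q x (i + 1) j N
      = (∑ k ∈ Finset.range N,
            (qint q k + x * q ^ k) * (Lmat q x i k * Ediag q x k * Lmat q x j k))
        + (∑ k ∈ Finset.range N,
            x * q ^ k * qint q (k + 1) * (Lmat q x i k * Ediag q x k * Lmat q x j (k + 1)))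
        + (∑ k ∈ Finset.range N,
            x * q ^ k * qint q (k + 1) * (Lmat q x i (k + 1) * Ediag q x k * Lmat q x j k)) := by
  obtain ⟨M, rfl⟩ : ∃ M, N = M + 1 := ⟨N - 1, by omega⟩
  have hiM : i < M := by omega
  rw [Tb, Finset.sum_range_succ']
  simp only [Lmat_succ_succ, Lmat_succ_zero, add_mul, mul_add, Finset.sum_add_distrib]
  have hA : ∑ k ∈ Finset.range (M + 1),
        qint q k * (Lmat q x i k * Ediag q x k * Lmat q x j k)
      = ∑ k ∈ Finset.range M,
          qint q (k + 1) * Lmat q x i (k + 1) * Ediag q x (k + 1) * Lmat q x j (k + 1) := by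
    rw [Finset.sum_range_succ', qint_zero, zero_mul, add_zero]
    exact Finset.sum_congr rfl fun k _ => by ring
  have hB : ∑ k ∈ Finset.range (M + 1),
        x * q ^ k * (Lmat q x i k * Ediag q x k * Lmat q x j k)
      = (∑ k ∈ Finset.range M,
          x * q ^ (k + 1) * Lmat q x i (k + 1) * Ediag q x (k + 1) * Lmat q x j (k + 1))
        + x * Lmat q x i 0 * Ediag q x 0 * Lmat q x j 0 := by
    rw [Finset.sum_range_succ']
    refine congrArg₂ (· + ·) (Finset.sum_congr rfl fun k _ => by ring) (by ring)
  have hU2 : ∑ k ∈ Finset.range (M + 1),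
        x * q ^ k * qint q (k + 1) * (Lmat q x i k * Ediag q x k * Lmat q x j (k + 1))
      = ∑ k ∈ Finset.range M, Lmat q x i k * Ediag q x (k + 1) * Lmat q x j (k + 1) := by
    rw [Finset.sum_range_succ, Lmat_eq_zero q x hiM]
    rw [show x * q ^ M * qint q (M + 1) * (0 * Ediag q x M * Lmat q x j (M + 1)) = 0 from by
      ring, add_zero]
    refine Finset.sum_congr rfl fun k _ => ?_
    rw [Ediag_succ]
    ring
  have hU3 : ∑ k ∈ Finset.range (M + 1),
        x * q ^ k * qint q (k + 1) * (Lmat q x i (k + 1) * Ediag q x k * Lmat q x j k)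
      = (∑ k ∈ Finset.range M,
          x * q ^ (k + 1) * qint q (k + 2) * Lmat q x i (k + 2) * Ediag q x (k + 1)
            * Lmat q x j (k + 1))
        + x * Lmat q x i 1 * Ediag q x 0 * Lmat q x j 0 := by
    rw [Finset.sum_range_succ']
    refine congrArg₂ (· + ·) (Finset.sum_congr rfl fun k _ => by rw [Ediag_succ]; ring) ?_
    simp only [zero_add, qint_one]
    ring
  rw [hA, hB, hU2, hU3]
  ring

lemma Tb_shift {i j N : ℕ} (h1 : i + 2 ≤ N) (h2 : j + 2 ≤ N) :
    Tb q x (i + 1) j N = Tb q x i (j + 1) N := by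
  rw [Tb_expand q x j h1, Tb_comm q x i (j + 1) N, Tb_expand q x i h2]
  have e1 : ∑ k ∈ Finset.range N,
        (qint q k + x * q ^ k) * (Lmat q x i k * Ediag q x k * Lmat q x j k)
      = ∑ k ∈ Finset.range N,
        (qint q k + x * q ^ k) * (Lmat q x j k * Ediag q x k * Lmat q x i k) :=
    Finset.sum_congr rfl fun k _ => by ring
  have e2 : ∑ k ∈ Finset.range N,
        x * q ^ k * qint q (k + 1) * (Lmat q x i k * Ediag q x k * Lmat q x j (k + 1))
      = ∑ k ∈ Finset.range N,
        x * q ^ k * qint q (k + 1) * (Lmat q x j (k + 1) * Ediag q x k * Lmat q x i k) :=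
    Finset.sum_congr rfl fun k _ => by ring
  have e3 : ∑ k ∈ Finset.range N,
        x * q ^ k * qint q (k + 1) * (Lmat q x i (k + 1) * Ediag q x k * Lmat q x j k)
      = ∑ k ∈ Finset.range N,
        x * q ^ k * qint q (k + 1) * (Lmat q x j k * Ediag q x k * Lmat q x i (k + 1)) :=
    Finset.sum_congr rfl fun k _ => by ring
  rw [e1, e2, e3]
  ring

lemma Tb_ext {i N : ℕ} (j : ℕ) (hi : i + 1 ≤ N) {M : ℕ} (hNM : N ≤ M) :
    Tb q x i j N = Tb q x i j M := by
  refine Finset.sum_subset (Finset.range_subset_range.mpr hNM) fun k _ hk => ?_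
  rw [Lmat_eq_zero q x (show i < k by
    have := Finset.mem_range.not.mp hk; omega)]
  ring

lemma Tb_eval : ∀ i j : ℕ, Tb q x i j (i + j + 2)
    = ∑ k ∈ Finset.range (i + j + 1), qStirling2 q (i + j) k * x ^ k := by
  intro i
  induction i with
  | zero =>
      intro j
      rw [Tb]
      rw [Finset.sum_eq_single_of_mem 0 (Finset.mem_range.mpr (by omega))
        (fun k _ hk => by
          rw [Lmat_eq_zero q x (show 0 < k by omega)]; ring)]
      rw [Lmat_diag, Ediag_zero, Lmat_zero_right, one_mul, one_mul]
      simp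
  | succ i ih =>
      intro j
      have h1 : Tb q x (i + 1) j (i + 1 + j + 2) = Tb q x i (j + 1) (i + 1 + j + 2) :=
        Tb_shift q x (by omega) (by omega)
      have h2 : Tb q x i (j + 1) (i + 1 + j + 2) = Tb q x i (j + 1) (i + (j + 1) + 2) := by
        rw [show i + 1 + j + 2 = i + (j + 1) + 2 from by omega]
      rw [h1, h2, ih (j + 1), show i + (j + 1) = i + 1 + j from by omega]

lemma sum_range_choose_two (n : ℕ) : ∑ k ∈ Finset.range n, k = n.choose 2 := by
  induction n with
  | zero => rfl
  | succ n ih =>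
      rw [Finset.sum_range_succ, ih, Nat.choose_succ_succ n 1, Nat.choose_one_right]
      simp only [Nat.succ_eq_add_one, Nat.reduceAdd]
      omega

lemma sum_range_choose_three (n : ℕ) : ∑ k ∈ Finset.range n, k.choose 2 = n.choose 3 := by
  induction n with
  | zero => rfl
  | succ n ih =>
      rw [Finset.sum_range_succ, ih, Nat.choose_succ_succ n 2]
      simp only [Nat.succ_eq_add_one, Nat.reduceAdd]
      omega

end HankelL

/-- Hankel determinant of the q-exponential polynomials `φ_n(x)`. -/
theorem hankel_det_qexp {R : Type*} [CommRing R] (q x : R) (n : ℕ) :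
    (Matrix.of fun i j : Fin n =>
        ∑ k ∈ Finset.range ((i : ℕ) + (j : ℕ) + 1),
          qStirling2 q ((i : ℕ) + (j : ℕ)) k * x ^ k).det =
      x ^ n.choose 2 * q ^ n.choose 3 * ∏ j ∈ Finset.range n, qfact q j := by
  classical
  set A : Matrix (Fin n) (Fin n) R := Matrix.of fun i k : Fin n => Lmat q x i k with hA
  have hfact : (Matrix.of fun i j : Fin n =>
      ∑ k ∈ Finset.range ((i : ℕ) + (j : ℕ) + 1),
        qStirling2 q ((i : ℕ) + (j : ℕ)) k * x ^ k)
      = A * Matrix.diagonal (fun k : Fin n => Ediag q x k) * Aᵀ := by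
    ext i j
    have hmul : (A * Matrix.diagonal (fun k : Fin n => Ediag q x k) * Aᵀ) i j
        = ∑ k : Fin n, Lmat q x i k * Ediag q x k * Lmat q x j k := by
      rw [Matrix.mul_apply]
      refine Finset.sum_congr rfl fun k _ => ?_
      rw [Matrix.mul_diagonal]
      rfl
    have hrange : (∑ k : Fin n, Lmat q x (i : ℕ) k * Ediag q x k * Lmat q x (j : ℕ) k)
        = Tb q x i j n := by
      rw [Tb]
      exact Fin.sum_univ_eq_sum_range (fun k => Lmat q x i k * Ediag q x k * Lmat q x j k) n
    have hi : (i : ℕ) + 1 ≤ n := i.isLt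
    have hTb : Tb q x i j n = Tb q x i j ((i : ℕ) + (j : ℕ) + 2) := by
      rw [Tb_ext q x j hi (le_max_left n ((i : ℕ) + (j : ℕ) + 2)),
        Tb_ext q x j (show (i : ℕ) + 1 ≤ (i : ℕ) + (j : ℕ) + 2 by omega)
          (le_max_right n ((i : ℕ) + (j : ℕ) + 2))]
    rw [Matrix.of_apply, hmul, hrange, hTb, Tb_eval]
  rw [hfact, Matrix.det_mul, Matrix.det_mul, Matrix.det_transpose]
  have hAdet : A.det = 1 := by
    rw [Matrix.det_of_lowerTriangular A
      (fun i j hij => Lmat_eq_zero q x (show (i : ℕ) < (j : ℕ) from hij))]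
    exact Finset.prod_eq_one fun i _ => Lmat_diag q x i
  rw [hAdet, Matrix.det_diagonal]
  have hprod : (∏ k : Fin n, Ediag q x k)
      = x ^ n.choose 2 * q ^ n.choose 3 * ∏ j ∈ Finset.range n, qfact q j := by
    rw [Fin.prod_univ_eq_prod_range (fun k => Ediag q x k) n]
    unfold Ediag
    rw [Finset.prod_mul_distrib, Finset.prod_mul_distrib,
      Finset.prod_pow_eq_pow_sum, Finset.prod_pow_eq_pow_sum,
      sum_range_choose_two, sum_range_choose_three]
    ring
  rw [hprod]
  ring
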